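/- arXiv:2504.03865 — 3 statements merged into one kernel-verified Lean document; each statement's English description precedes it below -/
import Mathlib

section
/- Given a basis unnatural transformation $\phi : F \leadsto G^n$ and $k \geq \max_{S,T} L_{\Parallelograml}^{S,T}(\phi)$ taken over all pairs of basic opens $S \subseteq T$, the extension $\Phi_S = G[S^n \subseteq S^{n+k}] \circ \phi_S$ satisfies the naturality square: for every inclusion $S \subseteq T$ of basic opens, $G[S^{n+k} \subseteq T^{n+k}] \circ \Phi_S = \Phi_T \circ F[S \subseteq T]$. -/
variable {α : Type*} [Preorder α]

/-- The up-set of a subset of a poset. -/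
def upSet (S : Set α) : Set α := {u | ∃ v ∈ S, v ≤ u}

/-- The down-set of a subset of a poset. -/
def downSet (S : Set α) : Set α := {u | ∃ v ∈ S, u ≤ v}

/-- The `n`-fold Alexandrov thickening `S^n`. -/
def thicken (S : Set α) : ℕ → Set α
  | 0 => S
  | n + 1 => downSet (upSet (thicken S n))

lemma subset_downUp (S : Set α) : S ⊆ downSet (upSet S) :=
  fun u hu => ⟨u, ⟨u, hu, le_refl u⟩, le_refl u⟩

lemma self_subset_thicken (S : Set α) : ∀ n : ℕ, S ⊆ thicken S n
  | 0 => Set.Subset.rfl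
  | n + 1 => (self_subset_thicken S n).trans (subset_downUp _)

lemma thicken_le (S : Set α) {m n : ℕ} (h : m ≤ n) : thicken S m ⊆ thicken S n := by
  induction h with
  | refl => exact Set.Subset.rfl
  | step _ ih => exact ih.trans (subset_downUp _)

lemma thicken_subset {S T : Set α} (h : S ⊆ T) : ∀ n : ℕ, thicken S n ⊆ thicken T n := by
  intro n
  induction n with
  | zero => exact h
  | succ n ih =>
    rintro u ⟨v, ⟨w, hw, hwv⟩, huv⟩
    exact ⟨v, ⟨w, ih hw, hwv⟩, huv⟩

lemma thicken_thicken (S : Set α) (m : ℕ) :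
    ∀ n : ℕ, thicken (thicken S m) n = thicken S (m + n)
  | 0 => rfl
  | n + 1 => by
    show downSet (upSet (thicken (thicken S m) n)) = downSet (upSet (thicken S (m + n)))
    rw [thicken_thicken S m n]
/-- A `Set`-valued functor on the Alexandrov-open sets of the poset `α`
(the data of a mapper cosheaf). -/
structure MapperCosheaf (α : Type*) [Preorder α] where
  obj : Set α → Type*
  map : ∀ ⦃S T : Set α⦄, S ⊆ T → obj S → obj T
  map_id : ∀ (S : Set α) (a : obj S), map (Set.Subset.refl S) a = a
  map_comp : ∀ ⦃S T U : Set α⦄ (h₁ : S ⊆ T) (h₂ : T ⊆ U) (a : obj S),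
      map h₂ (map h₁ a) = map (h₁.trans h₂) a

/-- The distance `d_S^F(A,B)`: the least `k` with
`F[S ⊆ S^k](A) = F[S ⊆ S^k](B)`, or `∞` if none exists. -/
noncomputable def fdist (F : MapperCosheaf α) (S : Set α) (A B : F.obj S) : ℕ∞ :=
  sInf {x : ℕ∞ | ∃ k : ℕ, x = (k : ℕ∞) ∧
    F.map (self_subset_thicken S k) A = F.map (self_subset_thicken S k) B}

/-- An `n`-interleaving between two mapper cosheaves. -/
def IsInterleaving (F G : MapperCosheaf α) (n : ℕ) : Prop :=
  ∃ (φ : ∀ S : Set α, F.obj S → G.obj (thicken S n))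
    (ψ : ∀ S : Set α, G.obj S → F.obj (thicken S n)),
    (∀ ⦃S T : Set α⦄, downSet S = S → downSet T = T → ∀ (h : S ⊆ T) (a : F.obj S),
        G.map (thicken_subset h n) (φ S a) = φ T (F.map h a)) ∧
    (∀ ⦃S T : Set α⦄, downSet S = S → downSet T = T → ∀ (h : S ⊆ T) (a : G.obj S),
        F.map (thicken_subset h n) (ψ S a) = ψ T (G.map h a)) ∧
    (∀ S : Set α, downSet S = S → ∀ a : F.obj S,
        F.map (thicken_thicken S n n).subset (ψ (thicken S n) (φ S a)) =
          F.map (self_subset_thicken S (n + n)) a) ∧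
    (∀ S : Set α, downSet S = S → ∀ a : G.obj S,
        G.map (thicken_thicken S n n).subset (φ (thicken S n) (ψ S a)) =
          G.map (self_subset_thicken S (n + n)) a)

/-- The interleaving distance between mapper cosheaves. -/
noncomputable def interleavingDist (F G : MapperCosheaf α) : ℕ∞ :=
  sInf {x : ℕ∞ | ∃ n : ℕ, x = (n : ℕ∞) ∧ IsInterleaving F G n}


lemma fdist_le_iff {α : Type*} [Preorder α] (G : MapperCosheaf α) (S : Set α)
    (A B : G.obj S) (k : ℕ) (h : fdist G S A B ≤ (k : ℕ∞)) :
    ∃ m : ℕ, m ≤ k ∧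
      G.map (self_subset_thicken S m) A = G.map (self_subset_thicken S m) B := by
  set s : Set ℕ∞ := {x : ℕ∞ | ∃ m : ℕ, x = (m : ℕ∞) ∧
    G.map (self_subset_thicken S m) A = G.map (self_subset_thicken S m) B} with hs
  have hne : s.Nonempty := by
    by_contra hemp
    rw [Set.not_nonempty_iff_eq_empty] at hemp
    have : fdist G S A B = ⊤ := by rw [fdist, ← hs, hemp, sInf_empty]
    rw [this] at h
    exact absurd (le_antisymm h le_top) (by simp)
  have hmem : sInf s ∈ s := csInf_mem hne
  obtain ⟨m, hm, heq⟩ := hmem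
  refine ⟨m, ?_, heq⟩
  have : sInf s ≤ (k : ℕ∞) := h
  rw [hm] at this
  exact_mod_cast this

/-- Extending a basis unnatural transformation `φ : F ⇝ G^n` by a shift `k`
bounding all edge-vertex parallelogram losses yields maps
`Φ_S = G[S^n ⊆ S^{n+k}] ∘ φ_S` satisfying the naturality squares on basic opens. -/
theorem extension_is_natural {α : Type*} [Preorder α] (F G : MapperCosheaf α)
    (n k : ℕ)
    (φ : ∀ ρ : α, F.obj (downSet {ρ}) → G.obj (thicken (downSet {ρ}) n))
    (hk : ∀ (ρ ρ' : α) (h : downSet {ρ} ⊆ downSet {ρ'}) (a : F.obj (downSet {ρ})),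
      fdist G (thicken (downSet {ρ'}) n)
        (φ ρ' (F.map h a))
        (G.map (thicken_subset h n) (φ ρ a)) ≤ (k : ℕ∞)) :
    ∀ (ρ ρ' : α) (h : downSet {ρ} ⊆ downSet {ρ'}) (a : F.obj (downSet {ρ})),
      G.map (thicken_subset h (n + k))
          (G.map (thicken_le (downSet {ρ}) (Nat.le_add_right n k)) (φ ρ a)) =
        G.map (thicken_le (downSet {ρ'}) (Nat.le_add_right n k))
          (φ ρ' (F.map h a)) := by
  intro ρ ρ' h a
  obtain ⟨m, hm, heq⟩ := fdist_le_iff G _ _ _ k (hk ρ ρ' h a)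
  have hsub : thicken (thicken (downSet {ρ'}) n) m ⊆ thicken (downSet {ρ'}) (n + k) := by
    rw [thicken_thicken]
    exact thicken_le _ (by omega)
  have := congrArg (G.map hsub) heq
  rw [G.map_comp, G.map_comp, G.map_comp] at this
  rw [G.map_comp]
  exact this.symm
end

section
/- The interleaving distance between the line mapper cosheaf $L$ and the torus mapper cosheaf $T_h$ with loop of height $h$ is $d_I(L, T_h) = \lceil h/4 \rceil$. -/
variable {α : Type*} [Preorder α]

/-- The vertex cover element `U_{σ_i} = ((i-1)δ, (i+1)δ)`. -/
def Usig (δ : ℝ) (i : ℤ) : Set ℝ := Set.Ioo (((i : ℝ) - 1) * δ) (((i : ℝ) + 1) * δ)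

/-- The edge cover element `U_{τ_i} = (iδ, (i+1)δ)`. -/
def Utau (δ : ℝ) (i : ℤ) : Set ℝ := Set.Ioo ((i : ℝ) * δ) (((i : ℝ) + 1) * δ)

/-- The cover `𝒰` of `ℝ`. -/
def Cover (δ : ℝ) : Set (Set ℝ) := Set.range (Usig δ) ∪ Set.range (Utau δ)

/-- The cover poset `𝒰`, ordered by set inclusion. -/
abbrev CoverPoset (δ : ℝ) := {U : Set ℝ // U ∈ Cover δ}

/-- `U_{σ_i}` as an element of the cover poset. -/
def sigC (δ : ℝ) (i : ℤ) : CoverPoset δ := ⟨Usig δ i, Or.inl ⟨i, rfl⟩⟩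

/-- `U_{τ_i}` as an element of the cover poset. -/
def tauC (δ : ℝ) (i : ℤ) : CoverPoset δ := ⟨Utau δ i, Or.inr ⟨i, rfl⟩⟩

/-- Geometric realization `|S| = ⋃_{U ∈ S} U`. -/
def geomReal {δ : ℝ} (S : Set (CoverPoset δ)) : Set ℝ := {x | ∃ U ∈ S, x ∈ (U : Set ℝ)}
/-- The set of connected components of the subspace `A` of `X`. -/
def Pi0 {X : Type*} [TopologicalSpace X] (A : Set X) : Type _ :=
  Quot (fun x y : A => (y : X) ∈ connectedComponentIn A (x : X))

/-- The map on connected components induced by an inclusion `A ⊆ B`. -/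
def Pi0.map {X : Type*} [TopologicalSpace X] {A B : Set X} (h : A ⊆ B) :
    Pi0 A → Pi0 B :=
  Quot.lift (fun x => Quot.mk _ (Set.inclusion h x))
    (fun x _ hxy => Quot.sound (connectedComponentIn_mono (x : X) h hxy))

/-- Geometric realization of a set of cover elements. -/
def geomRealization {δ : ℝ} (S : Set (CoverPoset δ)) : Set ℝ :=
  {x | ∃ U ∈ S, x ∈ (U : Set ℝ)}

lemma geomRealization_mono {δ : ℝ} {S T : Set (CoverPoset δ)} (h : S ⊆ T) :
    geomRealization S ⊆ geomRealization T := by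
  rintro x ⟨U, hU, hx⟩; exact ⟨U, h hU, hx⟩

/-- The mapper cosheaf of a space `X` with filter function `f : X → ℝ`, at
resolution `δ = 1`: over an open set `S` of the cover poset it returns the
connected components of `f⁻¹(|S|)`. -/
def mapperCosheafOf (X : Type) [TopologicalSpace X] (f : X → ℝ) :
    MapperCosheaf (CoverPoset 1) where
  obj S := Pi0 (f ⁻¹' geomRealization S)
  map _ _ h := Pi0.map (Set.preimage_mono (geomRealization_mono h))
  map_id S a := by induction a using Quot.ind; rfl
  map_comp _ _ _ h₁ h₂ a := by induction a using Quot.ind; rfl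

/-- The line space: the interval `[0, N]`, with filter function the height. -/
def lineSpace (N : ℤ) : Set ℝ := Set.Icc (0 : ℝ) (N : ℝ)

/-- The line mapper cosheaf: one connected component at every level. -/
def lineMapper (N : ℤ) : MapperCosheaf (CoverPoset 1) :=
  mapperCosheafOf (lineSpace N) (fun x => (x : ℝ))

/-- The torus graph embedded in `ℝ²`: a vertical path from level `0` up to
level `a`, a loop spanning levels `a` to `a + h`, and a path up to level `N`;
the filter function is the second coordinate. -/
def torusSet (a : ℤ) (h : ℕ) (N : ℤ) : Set (ℝ × ℝ) :=
  ({0} : Set ℝ) ×ˢ (Set.Icc (0 : ℝ) (a : ℝ) ∪ Set.Icc ((a : ℝ) + (h : ℝ)) (N : ℝ)) ∪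
  ({-1, 1} : Set ℝ) ×ˢ Set.Icc (a : ℝ) ((a : ℝ) + (h : ℝ)) ∪
  Set.Icc (-1 : ℝ) 1 ×ˢ ({(a : ℝ), (a : ℝ) + (h : ℝ)} : Set ℝ)

/-- The torus mapper cosheaf `T_h` with loop of height `h` spanning levels
`a` to `a + h`. -/
def torusMapper (a : ℤ) (h : ℕ) (N : ℤ) : MapperCosheaf (CoverPoset 1) :=
  mapperCosheafOf (torusSet a h N) (fun p => (p : ℝ × ℝ).2)

/-!
For `h ≤ 4n` an `n`-interleaving comes from two maps over `ℝ`: the height map from the torus to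
the line, and the section `torusSection a h` running up the left side of the loop. On the line the
composite is the identity. On the torus, a point at height `x ∈ |S|` lies over an edge `τ_j ∈ S`
(as `S` is down-closed), and `|S^{2n}|` contains `(j - 2n, j + 1 + 2n)`. Since the loop has height
`h ≤ 4n`, one of its two caps lies in this interval, and through that cap the point is joined to
the section point at height `x` over `S^{2n}`.

For `4n < h`, take `S = {τ_{a+2n}}`. The two sides of the loop at height `a + 2n + 1/2` have the
same image in the line over `S^n`, which is connected, so an `n`-interleaving would connect them
over `S^{2n}`. But `|S^{2n}| = (a, a + 4n + 1)` lies strictly inside the loop, where the two sides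
are separated.
-/

open Set

section ConnectedComponents

variable {X Y : Type*} [TopologicalSpace X] [TopologicalSpace Y]

lemma Pi0.mk_eq_mk_iff {A : Set X} {x y : A} :
    (Quot.mk _ x : Pi0 A) = Quot.mk _ y ↔ (y : X) ∈ connectedComponentIn A x := by
  refine ⟨fun hxy => ?_, fun hxy => Quot.sound hxy⟩
  have hcc : connectedComponentIn A x = connectedComponentIn A y :=
    congrArg (Quot.lift (fun z : A => connectedComponentIn A (z : X))
      fun _ _ => connectedComponentIn_eq) hxy
  exact hcc ▸ mem_connectedComponentIn y.2

lemma Pi0.subsingleton_of_isPreconnected {A : Set X} (hA : IsPreconnected A) :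
    Subsingleton (Pi0 A) := by
  refine ⟨fun u v => ?_⟩
  induction u using Quot.ind with | _ x =>
  induction v using Quot.ind with | _ y =>
  exact Quot.sound (hA.subset_connectedComponentIn x.2 subset_rfl y.2)

lemma isPreconnected_preimage_val {Z B : Set X} (hZB : IsPreconnected (Z ∩ B)) :
    IsPreconnected ((↑) ⁻¹' B : Set Z) :=
  Topology.IsInducing.subtypeVal.isPreconnected_image.mp (by rwa [Subtype.image_preimage_coe])

lemma mem_connectedComponentIn_preimage_val_iff {Z B : Set X} {x y : Z} :
    y ∈ connectedComponentIn ((↑) ⁻¹' B : Set Z) x ↔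
      (y : X) ∈ connectedComponentIn (Z ∩ B) x := by
  constructor
  · intro hy
    have hx : x ∈ ((↑) ⁻¹' B : Set Z) := connectedComponentIn_nonempty_iff.mp ⟨y, hy⟩
    simpa only [Subtype.image_preimage_coe] using
      continuous_subtype_val.continuousOn.mapsTo_connectedComponentIn hx hy
  · intro hy
    set C := connectedComponentIn (Z ∩ B) (x : X)
    have hCZB : C ⊆ Z ∩ B := connectedComponentIn_subset _ _
    have hC : IsPreconnected ((↑) ⁻¹' C : Set Z) := isPreconnected_preimage_val
      (by rw [inter_eq_right.mpr (hCZB.trans inter_subset_left)]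
          exact isPreconnected_connectedComponentIn)
    have hx : (x : X) ∈ C :=
      mem_connectedComponentIn (connectedComponentIn_nonempty_iff.mp ⟨_, hy⟩)
    exact hC.subset_connectedComponentIn hx (fun z hz => (hCZB hz).2) hy

lemma Continuous.mem_connectedComponentIn_of_mapsTo {g : X → Y} (hg : Continuous g)
    {A : Set X} {B : Set Y} (hAB : MapsTo g A B) {x y : X}
    (hy : y ∈ connectedComponentIn A x) : g y ∈ connectedComponentIn B (g x) :=
  connectedComponentIn_mono _ hAB.image_subset <|
    hg.continuousOn.mapsTo_connectedComponentIn (connectedComponentIn_nonempty_iff.mp ⟨y, hy⟩) hy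

lemma uIcc_subset_of_mem_connectedComponentIn {A : Set ℝ} {x y : ℝ}
    (hy : y ∈ connectedComponentIn A x) : uIcc x y ⊆ A :=
  (isPreconnected_connectedComponentIn.ordConnected.uIcc_subset
    (mem_connectedComponentIn (connectedComponentIn_nonempty_iff.mp ⟨y, hy⟩)) hy).trans
    (connectedComponentIn_subset _ _)

lemma Icc_subset_or_Icc_subset {U : Set ℝ} {l r b c x : ℝ} (hU : Ioo l r ⊆ U) (hx : x ∈ U)
    (hlx : l ≤ x) (hxr : x < r) (hbc : c - b < r - l) : Icc b x ⊆ U ∨ Icc x c ⊆ U := by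
  by_cases hb : l < b
  · refine Or.inl fun t ⟨htb, htx⟩ => ?_
    rcases htx.eq_or_lt with rfl | htx
    · exact hx
    · exact hU ⟨by linarith, by linarith⟩
  · refine Or.inr fun t ⟨htx, htc⟩ => ?_
    rcases htx.eq_or_lt with rfl | htx
    · exact hx
    · exact hU ⟨by linarith, by linarith⟩

end ConnectedComponents

section MapperCosheaf

lemma mapperCosheafOf_mk_eq_mk_iff {Z : Type} [TopologicalSpace Z] {Y : Set Z} {g : Z → ℝ}
    {S : Set (CoverPoset 1)} {x y : ((fun p : Y => g p) ⁻¹' geomRealization S)} :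
    (Quot.mk _ x : (mapperCosheafOf Y fun p => g p).obj S) = Quot.mk _ y ↔
      ((y : Y) : Z) ∈ connectedComponentIn (Y ∩ g ⁻¹' geomRealization S) ((x : Y) : Z) :=
  Pi0.mk_eq_mk_iff.trans (mem_connectedComponentIn_preimage_val_iff (B := g ⁻¹' geomRealization S))

variable {X X' : Type} [TopologicalSpace X] [TopologicalSpace X'] {f : X → ℝ} {f' : X' → ℝ}
  (g : X → X') (hg : ∀ x, f' (g x) = f x)
  (hcc : ∀ (U : Set ℝ) (x y : X), y ∈ connectedComponentIn (f ⁻¹' U) x →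
    g y ∈ connectedComponentIn (f' ⁻¹' U) (g x))

def inducedMap (S : Set (CoverPoset 1)) :
    (mapperCosheafOf X f).obj S → (mapperCosheafOf X' f').obj S :=
  Quot.lift (fun x => Quot.mk _ ⟨g x, show f' (g x) ∈ geomRealization S by rw [hg]; exact x.2⟩)
    fun x y hxy => Quot.sound (hcc _ x y hxy)

lemma inducedMap_natural ⦃S T : Set (CoverPoset 1)⦄ (hST : S ⊆ T)
    (u : (mapperCosheafOf X f).obj S) :
    (mapperCosheafOf X' f').map hST (inducedMap g hg hcc S u) =
      inducedMap g hg hcc T ((mapperCosheafOf X f).map hST u) := by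
  induction u using Quot.ind; rfl

end MapperCosheaf

section Interleaving

lemma isInterleaving_of_natural {F G : MapperCosheaf α} (n : ℕ)
    (η : ∀ S, F.obj S → G.obj S) (θ : ∀ S, G.obj S → F.obj S)
    (hη : ∀ ⦃S T⦄ (hST : S ⊆ T) u, G.map hST (η S u) = η T (F.map hST u))
    (hθ : ∀ ⦃S T⦄ (hST : S ⊆ T) u, F.map hST (θ S u) = θ T (G.map hST u))
    (hθη : ∀ S, downSet S = S → ∀ u, F.map (self_subset_thicken S (n + n)) (θ S (η S u)) =
      F.map (self_subset_thicken S (n + n)) u)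
    (hηθ : ∀ S, downSet S = S → ∀ u, G.map (self_subset_thicken S (n + n)) (η S (θ S u)) =
      G.map (self_subset_thicken S (n + n)) u) :
    IsInterleaving F G n := by
  refine ⟨fun S u => G.map (self_subset_thicken S n) (η S u),
    fun S u => F.map (self_subset_thicken S n) (θ S u), ?_, ?_, ?_, ?_⟩
  · intro S T _ _ hST u
    dsimp only
    rw [G.map_comp, ← hη, G.map_comp]
  · intro S T _ _ hST u
    dsimp only
    rw [F.map_comp, ← hθ, F.map_comp]
  · intro S hS u
    dsimp only
    rw [← hθ, F.map_comp, F.map_comp]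
    exact hθη S hS u
  · intro S hS u
    dsimp only
    rw [← hη, G.map_comp, G.map_comp]
    exact hηθ S hS u

lemma interleavingDist_eq {F G : MapperCosheaf α} {m : ℕ} (hm : IsInterleaving F G m)
    (hmin : ∀ n, IsInterleaving F G n → m ≤ n) : interleavingDist F G = m :=
  le_antisymm (sInf_le ⟨m, rfl, hm⟩)
    (le_sInf fun _ ⟨n, hx, hn⟩ => hx ▸ Nat.cast_le.mpr (hmin n hn))

end Interleaving

section CoverPoset

lemma coe_tauC (i : ℤ) : (tauC 1 i : Set ℝ) = Ioo (i : ℝ) (i + 1) := by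
  simp [tauC, Utau]

lemma coe_sigC (i : ℤ) : (sigC 1 i : Set ℝ) = Ioo ((i : ℝ) - 1) (i + 1) := by
  simp [sigC, Usig]

lemma exists_eq_Ioo_of_mem_cover {U : Set ℝ} (hU : U ∈ Cover 1) :
    ∃ c d : ℤ, U = Ioo (c : ℝ) d ∧ c < d ∧ d ≤ c + 2 := by
  rcases hU with ⟨i, rfl⟩ | ⟨i, rfl⟩
  · exact ⟨i - 1, i + 1, by push_cast; exact coe_sigC i, by omega, by omega⟩
  · exact ⟨i, i + 1, by push_cast; exact coe_tauC i, by omega, by omega⟩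

lemma tauC_le_sigC (i : ℤ) : tauC 1 i ≤ sigC 1 i := by
  change (tauC 1 i : Set ℝ) ⊆ sigC 1 i
  rw [coe_tauC, coe_sigC]
  exact Ioo_subset_Ioo (by linarith) le_rfl

lemma tauC_le_sigC_add_one (i : ℤ) : tauC 1 i ≤ sigC 1 (i + 1) := by
  change (tauC 1 i : Set ℝ) ⊆ sigC 1 (i + 1)
  rw [coe_tauC, coe_sigC]
  push_cast
  exact Ioo_subset_Ioo (by linarith) (by linarith)

variable {S T : Set (CoverPoset 1)}

lemma tauC_sub_one_mem_downSet_upSet {j : ℤ} (hj : tauC 1 j ∈ T) :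
    tauC 1 (j - 1) ∈ downSet (upSet T) :=
  ⟨sigC 1 j, ⟨tauC 1 j, hj, tauC_le_sigC j⟩, by simpa using tauC_le_sigC_add_one (j - 1)⟩

lemma tauC_add_one_mem_downSet_upSet {j : ℤ} (hj : tauC 1 j ∈ T) :
    tauC 1 (j + 1) ∈ downSet (upSet T) :=
  ⟨sigC 1 (j + 1), ⟨tauC 1 j, hj, tauC_le_sigC_add_one j⟩, tauC_le_sigC (j + 1)⟩

lemma tauC_sub_mem_thicken {i : ℤ} (hi : tauC 1 i ∈ S) : ∀ k : ℕ, tauC 1 (i - k) ∈ thicken S k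
  | 0 => by rw [Nat.cast_zero, sub_zero]; exact hi
  | k + 1 => by
    rw [Nat.cast_succ, ← sub_sub]
    exact tauC_sub_one_mem_downSet_upSet (tauC_sub_mem_thicken hi k)

lemma tauC_add_mem_thicken {i : ℤ} (hi : tauC 1 i ∈ S) : ∀ k : ℕ, tauC 1 (i + k) ∈ thicken S k
  | 0 => by rw [Nat.cast_zero, add_zero]; exact hi
  | k + 1 => by
    rw [Nat.cast_succ, ← add_assoc]
    exact tauC_add_one_mem_downSet_upSet (tauC_add_mem_thicken hi k)

lemma Ioo_subset_geomRealization_downSet_upSet {j : ℤ} (hj : tauC 1 j ∈ T) :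
    Ioo ((j : ℝ) - 1) (j + 2) ⊆ geomRealization (downSet (upSet T)) := by
  rintro x ⟨h1, h2⟩
  rcases lt_or_ge x (j + 1) with h3 | h3
  · refine ⟨sigC 1 j, ⟨sigC 1 j, ⟨tauC 1 j, hj, tauC_le_sigC j⟩, le_rfl⟩, ?_⟩
    rw [coe_sigC]
    exact ⟨h1, h3⟩
  · refine ⟨sigC 1 (j + 1), ⟨sigC 1 (j + 1), ⟨tauC 1 j, hj, tauC_le_sigC_add_one j⟩, le_rfl⟩, ?_⟩
    rw [coe_sigC]
    push_cast
    constructor <;> linarith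

lemma Ioo_subset_geomRealization_thicken {i : ℤ} (hi : tauC 1 i ∈ S) :
    ∀ k : ℕ, Ioo ((i : ℝ) - k) (i + 1 + k) ⊆ geomRealization (thicken S k)
  | 0 => fun x hx => ⟨tauC 1 i, hi, by simpa [coe_tauC] using hx⟩
  | k + 1 => by
    rintro x ⟨h1, h2⟩
    push_cast at h1 h2
    rcases le_or_gt x (i - k) with h3 | h3
    · refine Ioo_subset_geomRealization_downSet_upSet (tauC_sub_mem_thicken hi k) ?_
      push_cast
      constructor <;> linarith
    rcases lt_or_ge x (i + 1 + k) with h4 | h4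
    · exact geomRealization_mono (subset_downUp _)
        (Ioo_subset_geomRealization_thicken hi k ⟨h3, h4⟩)
    · refine Ioo_subset_geomRealization_downSet_upSet (tauC_add_mem_thicken hi k) ?_
      push_cast
      constructor <;> linarith

lemma subset_Ioo_of_mem_thicken {l r : ℝ} (hS : ∀ U ∈ S, (U : Set ℝ) ⊆ Ioo l r) :
    ∀ k : ℕ, ∀ U ∈ thicken S k, (U : Set ℝ) ⊆ Ioo (l - k) (r + k)
  | 0 => fun U hU => by simpa using hS U hU
  | k + 1 => by
    rintro U ⟨W, ⟨V, hV, hVW⟩, hUW⟩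
    have hVk := subset_Ioo_of_mem_thicken hS k V hV
    obtain ⟨c, d, hVcd, hcd, -⟩ := exists_eq_Ioo_of_mem_cover V.2
    obtain ⟨c', d', hWcd, -, hd'⟩ := exists_eq_Ioo_of_mem_cover W.2
    have hcdR : (c : ℝ) < d := by exact_mod_cast hcd
    change (V : Set ℝ) ⊆ W at hVW
    rw [hVcd] at hVk hVW
    rw [hWcd] at hVW
    obtain ⟨hc'c, hdd'⟩ := (Ioo_subset_Ioo_iff hcdR).mp hVW
    obtain ⟨hlc, hdr⟩ := (Ioo_subset_Ioo_iff hcdR).mp hVk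
    have hc' : ((c - 1 : ℤ) : ℝ) ≤ c' := by
      have : c' ≤ c := by exact_mod_cast hc'c
      have : d ≤ d' := by exact_mod_cast hdd'
      exact_mod_cast (by omega : c - 1 ≤ c')
    have hd'' : (d' : ℝ) ≤ ((d + 1 : ℤ) : ℝ) := by
      have : c' ≤ c := by exact_mod_cast hc'c
      exact_mod_cast (by omega : d' ≤ d + 1)
    push_cast at hc' hd'' hlc hdr
    refine (show (U : Set ℝ) ⊆ W from hUW).trans ?_
    rw [hWcd]
    push_cast
    exact Ioo_subset_Ioo (by linarith) (by linarith)

lemma geomRealization_thicken_singleton_tauC (i : ℤ) (k : ℕ) :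
    geomRealization (thicken ({tauC 1 i} : Set (CoverPoset 1)) k) =
      Ioo ((i : ℝ) - k) (i + 1 + k) := by
  refine Subset.antisymm ?_ (Ioo_subset_geomRealization_thicken (mem_singleton _) k)
  rintro x ⟨U, hU, hx⟩
  have hτ : ∀ U ∈ ({tauC 1 i} : Set (CoverPoset 1)), (U : Set ℝ) ⊆ Ioo (i : ℝ) (i + 1) := by
    rintro U rfl
    rw [coe_tauC]
  have := subset_Ioo_of_mem_thicken hτ k U hU hx
  rwa [add_right_comm] at this ⊢

lemma downSet_singleton_tauC (i : ℤ) :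
    downSet ({tauC 1 i} : Set (CoverPoset 1)) = {tauC 1 i} := by
  ext U
  refine ⟨?_, fun hU => ⟨U, hU, le_rfl⟩⟩
  rintro ⟨V, rfl, hUV⟩
  obtain ⟨c, d, hU, hcd, -⟩ := exists_eq_Ioo_of_mem_cover U.2
  have hcdR : (c : ℝ) < d := by exact_mod_cast hcd
  change (U : Set ℝ) ⊆ tauC 1 i at hUV
  rw [hU, coe_tauC] at hUV
  obtain ⟨hic, hdi⟩ := (Ioo_subset_Ioo_iff hcdR).mp hUV
  have hic' : i ≤ c := by exact_mod_cast hic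
  have hdi' : d ≤ i + 1 := by exact_mod_cast hdi
  obtain rfl : c = i := by omega
  obtain rfl : d = c + 1 := by omega
  exact Subtype.ext (by rw [hU, coe_tauC]; push_cast; rfl)

lemma exists_tauC_mem_of_mem_geomRealization (hS : downSet S = S) {x : ℝ}
    (hx : x ∈ geomRealization S) : ∃ j : ℤ, tauC 1 j ∈ S ∧ (j : ℝ) ≤ x ∧ x < j + 1 := by
  obtain ⟨U, hU, hxU⟩ := hx
  obtain ⟨c, d, hUcd, -, -⟩ := exists_eq_Ioo_of_mem_cover U.2
  rw [hUcd] at hxU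
  refine ⟨⌊x⌋, ?_, Int.floor_le x, Int.lt_floor_add_one x⟩
  have hc : c ≤ ⌊x⌋ := Int.le_floor.mpr hxU.1.le
  have hd : ⌊x⌋ + 1 ≤ d := Int.floor_lt.mpr hxU.2
  rw [← hS]
  refine ⟨U, hU, show (tauC 1 ⌊x⌋ : Set ℝ) ⊆ U from ?_⟩
  rw [coe_tauC, hUcd]
  exact Ioo_subset_Ioo (by exact_mod_cast hc) (by exact_mod_cast hd)

end CoverPoset

section TorusPath

variable {a : ℤ} {h : ℕ}

def torusWidth (a : ℤ) (h : ℕ) (s : ℝ) : ℝ :=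
  max 0 (min (min (s - a) 1) (a + h + 2 - s))

def torusHeight (a : ℤ) (h : ℕ) (s : ℝ) : ℝ :=
  max (min s a) (max (min (s - 1) (a + h)) (s - 2))

/-- For `ε = -1` (resp. `ε = 1`) this runs through the left (resp. right) half of the torus graph:
up the lower stem for `s ≤ a`, along the bottom cap, up the side `ε` of the loop, back along the
top cap, and up the upper stem for `s ≥ a + h + 2`. -/
def torusPath (a : ℤ) (h : ℕ) (ε s : ℝ) : ℝ × ℝ :=
  (ε * torusWidth a h s, torusHeight a h s)

@[simp]
lemma torusPath_snd (ε s : ℝ) : (torusPath a h ε s).2 = torusHeight a h s := rfl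

lemma continuous_torusPath (ε : ℝ) : Continuous (torusPath a h ε) := by
  unfold torusPath torusWidth torusHeight; fun_prop

lemma monotone_torusHeight : Monotone (torusHeight a h) := by
  intro s t hst
  unfold torusHeight
  gcongr

lemma torusPath_of_le {ε s : ℝ} (hs : s ≤ a) : torusPath a h ε s = (0, s) := by
  have := h.cast_nonneg (α := ℝ)
  have hw : torusWidth a h s = 0 := by
    simp only [torusWidth, max_def, min_def]; split_ifs <;> linarith
  have hh : torusHeight a h s = s := by
    simp only [torusHeight, max_def, min_def]; split_ifs <;> linarith
  rw [torusPath, hw, hh, mul_zero]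

lemma torusPath_of_mem_lowerCap {ε s : ℝ} (h1 : (a : ℝ) ≤ s) (h2 : s ≤ a + 1) :
    torusPath a h ε s = (ε * (s - a), (a : ℝ)) := by
  have := h.cast_nonneg (α := ℝ)
  have hw : torusWidth a h s = s - a := by
    simp only [torusWidth, max_def, min_def]; split_ifs <;> linarith
  have hh : torusHeight a h s = a := by
    simp only [torusHeight, max_def, min_def]; split_ifs <;> linarith
  rw [torusPath, hw, hh]

lemma torusPath_of_mem_loop {ε s : ℝ} (h1 : (a : ℝ) + 1 ≤ s) (h2 : s ≤ a + h + 1) :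
    torusPath a h ε s = (ε, s - 1) := by
  have hw : torusWidth a h s = 1 := by
    simp only [torusWidth, max_def, min_def]; split_ifs <;> linarith
  have hh : torusHeight a h s = s - 1 := by
    simp only [torusHeight, max_def, min_def]; split_ifs <;> linarith
  rw [torusPath, hw, hh, mul_one]

lemma torusPath_of_mem_upperCap {ε s : ℝ} (h1 : (a : ℝ) + h + 1 ≤ s) (h2 : s ≤ a + h + 2) :
    torusPath a h ε s = (ε * (a + h + 2 - s), (a + h : ℝ)) := by
  have := h.cast_nonneg (α := ℝ)
  have hw : torusWidth a h s = a + h + 2 - s := by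
    simp only [torusWidth, max_def, min_def]; split_ifs <;> linarith
  have hh : torusHeight a h s = a + h := by
    simp only [torusHeight, max_def, min_def]; split_ifs <;> linarith
  rw [torusPath, hw, hh]

lemma torusPath_of_ge {ε s : ℝ} (hs : (a : ℝ) + h + 2 ≤ s) : torusPath a h ε s = (0, s - 2) := by
  have := h.cast_nonneg (α := ℝ)
  have hw : torusWidth a h s = 0 := by
    simp only [torusWidth, max_def, min_def]; split_ifs <;> linarith
  have hh : torusHeight a h s = s - 2 := by
    simp only [torusHeight, max_def, min_def]; split_ifs <;> linarith
  rw [torusPath, hw, hh, mul_zero]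

end TorusPath

section TorusGeometry

variable {a N : ℤ} {h : ℕ}

lemma torusPath_mem_torusSet {ε s : ℝ} (hε : ε ∈ ({-1, 1} : Set ℝ))
    (hs : s ∈ Icc (0 : ℝ) (N + 2)) : torusPath a h ε s ∈ torusSet a h N := by
  have hcap : ∀ w ∈ Icc (0 : ℝ) 1, ε * w ∈ Icc (-1 : ℝ) 1 := by
    rintro w ⟨hw0, hw1⟩
    rcases hε with rfl | rfl <;> constructor <;> linarith
  rcases le_total s a with h1 | h1
  · rw [torusPath_of_le h1]
    exact Or.inl (Or.inl ⟨rfl, Or.inl ⟨hs.1, h1⟩⟩)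
  rcases le_total s (a + 1) with h2 | h2
  · rw [torusPath_of_mem_lowerCap h1 h2]
    exact Or.inr ⟨hcap _ ⟨by linarith, by linarith⟩, Or.inl rfl⟩
  rcases le_total s (a + h + 1) with h3 | h3
  · rw [torusPath_of_mem_loop h2 h3]
    exact Or.inl (Or.inr ⟨hε, by linarith, by linarith⟩)
  rcases le_total s (a + h + 2) with h4 | h4
  · rw [torusPath_of_mem_upperCap h3 h4]
    exact Or.inr ⟨hcap _ ⟨by linarith, by linarith⟩, Or.inr rfl⟩
  · rw [torusPath_of_ge h4]
    exact Or.inl (Or.inl ⟨rfl, Or.inr ⟨by linarith, by linarith [hs.2]⟩⟩)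

lemma torusPath_mem_connectedComponentIn {U : Set ℝ} {ε s t : ℝ}
    (hε : ε ∈ ({-1, 1} : Set ℝ)) (hs : s ∈ Icc (0 : ℝ) (N + 2)) (ht : t ∈ Icc (0 : ℝ) (N + 2))
    (hU : uIcc (torusHeight a h s) (torusHeight a h t) ⊆ U) :
    torusPath a h ε t ∈
      connectedComponentIn (torusSet a h N ∩ Prod.snd ⁻¹' U) (torusPath a h ε s) := by
  have hK : IsPreconnected (torusPath a h ε '' uIcc s t) :=
    isPreconnected_uIcc.image _ (continuous_torusPath ε).continuousOn
  refine hK.subset_connectedComponentIn (mem_image_of_mem _ left_mem_uIcc) ?_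
    (mem_image_of_mem _ right_mem_uIcc)
  rintro _ ⟨r, hr, rfl⟩
  exact ⟨torusPath_mem_torusSet hε (uIcc_subset_Icc hs ht hr),
    hU (monotone_torusHeight.mapsTo_uIcc hr)⟩

lemma torusPath_mem_connectedComponentIn_of_junction {U : Set ℝ} {ε s t J : ℝ}
    (hε : ε ∈ ({-1, 1} : Set ℝ)) (hs : s ∈ Icc (0 : ℝ) (N + 2)) (ht : t ∈ Icc (0 : ℝ) (N + 2))
    (hJ : J ∈ Icc (0 : ℝ) (N + 2)) (hJε : torusPath a h ε J = torusPath a h (-1) J)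
    (hsJ : uIcc (torusHeight a h s) (torusHeight a h J) ⊆ U)
    (hJt : uIcc (torusHeight a h J) (torusHeight a h t) ⊆ U) :
    torusPath a h (-1) t ∈
      connectedComponentIn (torusSet a h N ∩ Prod.snd ⁻¹' U) (torusPath a h ε s) := by
  have hsJ' := torusPath_mem_connectedComponentIn hε hs hJ hsJ
  rw [hJε] at hsJ'
  rw [connectedComponentIn_eq hsJ']
  exact torusPath_mem_connectedComponentIn (by simp) hJ ht hJt

end TorusGeometry

section TorusSection

variable {a N : ℤ} {h : ℕ}

/-- The parameter at which the left path `torusPath a h (-1)` passes through `(-1, t)` if `t` is a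
height of the loop, and through `(0, t)` otherwise. -/
noncomputable def sectionParam (a : ℤ) (h : ℕ) (t : ℝ) : ℝ :=
  t + (if (a : ℝ) ≤ t then 1 else 0) + (if (a : ℝ) + h < t then 1 else 0)

noncomputable def torusSection (a : ℤ) (h : ℕ) (t : ℝ) : ℝ × ℝ :=
  torusPath a h (-1) (sectionParam a h t)

lemma sectionParam_mem_Icc {t : ℝ} (ht : t ∈ Icc (0 : ℝ) N) :
    sectionParam a h t ∈ Icc (0 : ℝ) (N + 2) := by
  obtain ⟨ht0, htN⟩ := ht
  simp only [sectionParam]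
  split_ifs <;> constructor <;> linarith

lemma torusSection_of_notMem {t : ℝ} (ht : t ∉ Icc (a : ℝ) (a + h)) :
    torusSection a h t = (0, t) := by
  have hh := h.cast_nonneg (α := ℝ)
  rw [mem_Icc, not_and_or, not_le, not_le] at ht
  rcases ht with ht | ht
  · rw [torusSection, sectionParam, if_neg (not_le.mpr ht), if_neg (by linarith [hh]),
      add_zero, add_zero, torusPath_of_le ht.le]
  · rw [torusSection, sectionParam, if_pos (by linarith [hh]), if_pos ht,
      torusPath_of_ge (by linarith)]
    congr 1
    ring

lemma torusSection_of_mem {t : ℝ} (ht : t ∈ Icc (a : ℝ) (a + h)) :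
    torusSection a h t = (-1, t) := by
  rw [torusSection, sectionParam, if_pos ht.1, if_neg (not_lt.mpr ht.2), add_zero,
    torusPath_of_mem_loop (by linarith [ht.1]) (by linarith [ht.2]), add_sub_cancel_right]

lemma torusSection_snd (t : ℝ) : (torusSection a h t).2 = t := by
  by_cases ht : t ∈ Icc (a : ℝ) (a + h)
  · rw [torusSection_of_mem ht]
  · rw [torusSection_of_notMem ht]

lemma torusHeight_sectionParam (t : ℝ) : torusHeight a h (sectionParam a h t) = t :=
  torusSection_snd t

lemma torusSection_mem_torusSet {t : ℝ} (ht : t ∈ Icc (0 : ℝ) N) :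
    torusSection a h t ∈ torusSet a h N :=
  torusPath_mem_torusSet (by simp) (sectionParam_mem_Icc ht)

lemma torusSection_mem_connectedComponentIn {U : Set ℝ} {x y : ℝ} (hx : x ∈ Icc (0 : ℝ) N)
    (hy : y ∈ Icc (0 : ℝ) N) (hU : uIcc x y ⊆ U) :
    torusSection a h y ∈
      connectedComponentIn (torusSet a h N ∩ Prod.snd ⁻¹' U) (torusSection a h x) :=
  torusPath_mem_connectedComponentIn (by simp) (sectionParam_mem_Icc hx) (sectionParam_mem_Icc hy)
    (by rwa [torusHeight_sectionParam, torusHeight_sectionParam])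

end TorusSection

section TorusSet

variable {a N : ℤ} {h : ℕ} {p : ℝ × ℝ}

lemma snd_mem_Icc_of_mem_torusSet (ha : 0 ≤ a) (hN : a + h ≤ N) (hp : p ∈ torusSet a h N) :
    p.2 ∈ Icc (0 : ℝ) N := by
  have ha' : (0 : ℝ) ≤ a := by exact_mod_cast ha
  have hN' : (a : ℝ) + h ≤ N := by exact_mod_cast hN
  have := h.cast_nonneg (α := ℝ)
  rcases hp with (⟨-, ⟨h1, h2⟩ | ⟨h1, h2⟩⟩ | ⟨-, h1, h2⟩) | ⟨-, h1 | h1⟩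
  all_goals try rw [mem_singleton_iff] at h1
  all_goals constructor <;> linarith

lemma fst_eq_zero_of_mem_torusSet (hp : p ∈ torusSet a h N) (hx : p.2 ∉ Icc (a : ℝ) (a + h)) :
    p.1 = 0 := by
  rcases hp with (⟨h1, -⟩ | ⟨-, h2⟩) | ⟨-, h2⟩
  · exact h1
  · exact absurd h2 hx
  · have := h.cast_nonneg (α := ℝ)
    rw [mem_insert_iff, mem_singleton_iff] at h2
    rcases h2 with h2 | h2 <;> exact absurd ⟨by linarith, by linarith⟩ hx

lemma fst_eq_neg_one_or_one_of_mem_torusSet (hp : p ∈ torusSet a h N)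
    (hx : p.2 ∈ Ioo (a : ℝ) (a + h)) : p.1 = -1 ∨ p.1 = 1 := by
  obtain ⟨hx1, hx2⟩ := hx
  rcases hp with (⟨-, ⟨-, h2⟩ | ⟨h2, -⟩⟩ | ⟨h1, -⟩) | ⟨-, h2⟩
  · linarith
  · linarith
  · exact h1
  · rw [mem_insert_iff, mem_singleton_iff] at h2
    rcases h2 with h2 | h2 <;> linarith

lemma exists_torusPath_eq (hp : p ∈ torusSet a h N) (hx : p.2 ∈ Icc (a : ℝ) (a + h)) :
    ∃ ε ∈ ({-1, 1} : Set ℝ), ∃ s ∈ Icc (a : ℝ) (a + h + 2), torusPath a h ε s = p := by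
  obtain ⟨c, t⟩ := p
  obtain ⟨hx1, hx2⟩ := hx
  dsimp only at hx1 hx2
  have := h.cast_nonneg (α := ℝ)
  have hcap : c ∈ Icc (-1 : ℝ) 1 → ∃ ε ∈ ({-1, 1} : Set ℝ), ∃ w ∈ Icc (0 : ℝ) 1, ε * w = c := by
    rintro ⟨hc1, hc2⟩
    rcases le_total 0 c with hc | hc
    · exact ⟨1, by simp, c, ⟨hc, hc2⟩, one_mul c⟩
    · exact ⟨-1, by simp, -c, ⟨by linarith, by linarith⟩, by ring⟩
  rcases hp with (⟨hc, ht⟩ | ⟨hc, -⟩) | ⟨hc, ht⟩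
  · rw [mem_singleton_iff] at hc
    subst hc
    rcases ht with ⟨-, ht⟩ | ⟨ht, -⟩
    · obtain rfl : t = a := le_antisymm ht hx1
      exact ⟨1, by simp, a, ⟨le_rfl, by linarith⟩, torusPath_of_le le_rfl⟩
    · obtain rfl : t = a + h := le_antisymm hx2 ht
      exact ⟨1, by simp, a + h + 2, ⟨by linarith, le_rfl⟩,
        by rw [torusPath_of_ge le_rfl]; norm_num⟩
  · exact ⟨c, hc, t + 1, ⟨by linarith, by linarith⟩,
      by rw [torusPath_of_mem_loop (by linarith) (by linarith)]; norm_num⟩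
  · obtain ⟨ε, hε, w, ⟨hw0, hw1⟩, rfl⟩ := hcap hc
    refine ⟨ε, hε, ?_⟩
    rw [mem_insert_iff, mem_singleton_iff] at ht
    rcases ht with rfl | rfl
    · exact ⟨a + w, ⟨by linarith, by linarith⟩,
        by rw [torusPath_of_mem_lowerCap (by linarith) (by linarith)]; norm_num⟩
    · exact ⟨a + h + 2 - w, ⟨by linarith, by linarith⟩,
        by rw [torusPath_of_mem_upperCap (by linarith) (by linarith)]; norm_num⟩
end TorusSet

section KeyLemmas

variable {a N : ℤ} {h : ℕ}

lemma torusSection_mem_connectedComponentIn_of_mem_loop {U : Set ℝ} {ε s : ℝ} (ha : 0 ≤ a)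
    (hN : a + h ≤ N) (hε : ε ∈ ({-1, 1} : Set ℝ)) (hs : s ∈ Icc (a : ℝ) (a + h + 2))
    (hx : torusHeight a h s ∈ Icc (a : ℝ) (a + h))
    (hU : Icc (a : ℝ) (torusHeight a h s) ⊆ U ∨ Icc (torusHeight a h s) (a + h) ⊆ U) :
    torusSection a h (torusHeight a h s) ∈
      connectedComponentIn (torusSet a h N ∩ Prod.snd ⁻¹' U) (torusPath a h ε s) := by
  have ha' : (0 : ℝ) ≤ a := by exact_mod_cast ha
  have hN' : (a : ℝ) + h ≤ N := by exact_mod_cast hN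
  have hs' : s ∈ Icc (0 : ℝ) (N + 2) := ⟨by linarith [hs.1], by linarith [hs.2]⟩
  have hsx : sectionParam a h (torusHeight a h s) ∈ Icc (0 : ℝ) (N + 2) :=
    sectionParam_mem_Icc ⟨by linarith [hx.1], by linarith [hx.2]⟩
  have hlow : torusHeight a h a = a := congrArg Prod.snd (torusPath_of_le (ε := 1) le_rfl)
  have hhigh : torusHeight a h (a + h + 2) = a + h := by
    simpa using congrArg Prod.snd (torusPath_of_ge (a := a) (h := h) (ε := 1) le_rfl)
  rcases hU with hU | hU
  · refine torusPath_mem_connectedComponentIn_of_junction hε hs' hsx (J := a) ⟨ha', by linarith⟩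
      (by rw [torusPath_of_le le_rfl, torusPath_of_le le_rfl]) ?_ ?_
    · rwa [hlow, uIcc_of_ge hx.1]
    · rwa [hlow, torusHeight_sectionParam, uIcc_of_le hx.1]
  · refine torusPath_mem_connectedComponentIn_of_junction hε hs' hsx (J := a + h + 2)
      ⟨by linarith, by linarith⟩ (by rw [torusPath_of_ge le_rfl, torusPath_of_ge le_rfl]) ?_ ?_
    · rwa [hhigh, uIcc_of_le hx.2]
    · rwa [hhigh, torusHeight_sectionParam, uIcc_of_ge hx.2]

lemma torusSection_snd_mem_connectedComponentIn {S : Set (CoverPoset 1)} {n : ℕ} {p : ℝ × ℝ}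
    (ha : 0 ≤ a) (hN : a + h ≤ N) (h4 : h ≤ 4 * n) (hS : downSet S = S)
    (hp : p ∈ torusSet a h N) (hpS : p.2 ∈ geomRealization S) :
    torusSection a h p.2 ∈ connectedComponentIn
      (torusSet a h N ∩ Prod.snd ⁻¹' geomRealization (thicken S (n + n))) p := by
  have hxU : p.2 ∈ geomRealization (thicken S (n + n)) :=
    geomRealization_mono (self_subset_thicken S _) hpS
  by_cases hx : p.2 ∈ Icc (a : ℝ) (a + h)
  · obtain ⟨j, hjS, hjx, hxj⟩ := exists_tauC_mem_of_mem_geomRealization hS hpS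
    have h4' : (h : ℝ) ≤ 4 * n := by exact_mod_cast h4
    obtain ⟨ε, hε, s, hs, rfl⟩ := exists_torusPath_eq hp hx
    rw [torusPath_snd] at hx hxU hjx hxj ⊢
    exact torusSection_mem_connectedComponentIn_of_mem_loop ha hN hε hs hx <|
      Icc_subset_or_Icc_subset (Ioo_subset_geomRealization_thicken hjS (n + n)) hxU
        (by push_cast; linarith) (by push_cast; linarith) (by push_cast; linarith)
  · rw [torusSection_of_notMem hx, ← fst_eq_zero_of_mem_torusSet hp hx]
    exact mem_connectedComponentIn ⟨hp, hxU⟩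

end KeyLemmas

section LoopSeparation

variable {a N : ℤ} {h : ℕ}

/-- At heights strictly inside the loop the first coordinate only takes the values `-1` and `1`,
so it is constant on connected sets. -/
lemma notMem_connectedComponentIn_loop {U : Set ℝ} (hU : U ⊆ Ioo (a : ℝ) (a + h)) (t : ℝ) :
    ((1 : ℝ), t) ∉ connectedComponentIn (torusSet a h N ∩ Prod.snd ⁻¹' U) (-1, t) := by
  intro h1
  set C := connectedComponentIn (torusSet a h N ∩ Prod.snd ⁻¹' U) ((-1 : ℝ), t)
  have hC : IsPreconnected (Prod.fst '' C) :=
    isPreconnected_connectedComponentIn.image _ continuous_fst.continuousOn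
  have hm : ((-1 : ℝ), t) ∈ C :=
    mem_connectedComponentIn (connectedComponentIn_nonempty_iff.mp ⟨_, h1⟩)
  obtain ⟨z, hzC, hz⟩ : (0 : ℝ) ∈ Prod.fst '' C :=
    hC.ordConnected.out (mem_image_of_mem _ hm) (mem_image_of_mem _ h1) ⟨by norm_num, by norm_num⟩
  obtain ⟨hzT, hzU⟩ := connectedComponentIn_subset _ _ hzC
  rcases fst_eq_neg_one_or_one_of_mem_torusSet hzT (hU hzU) with h2 | h2 <;>
    rw [hz] at h2 <;> norm_num at h2

end LoopSeparation

section Interleavings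

variable {a N : ℤ} {h : ℕ}

noncomputable def lineToTorus (a : ℤ) (h : ℕ) (N : ℤ) (t : lineSpace N) : torusSet a h N :=
  ⟨torusSection a h t, torusSection_mem_torusSet t.2⟩

def torusToLine (ha : 0 ≤ a) (hN : a + h ≤ N) (p : torusSet a h N) : lineSpace N :=
  ⟨(p : ℝ × ℝ).2, snd_mem_Icc_of_mem_torusSet ha hN p.2⟩

lemma lineToTorus_mem_connectedComponentIn {U : Set ℝ} {x y : lineSpace N}
    (hxy : y ∈ connectedComponentIn ((fun t : lineSpace N => (t : ℝ)) ⁻¹' U) x) :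
    lineToTorus a h N y ∈
      connectedComponentIn ((fun p : torusSet a h N => (p : ℝ × ℝ).2) ⁻¹' U)
        (lineToTorus a h N x) := by
  have hU := uIcc_subset_of_mem_connectedComponentIn
    ((mem_connectedComponentIn_preimage_val_iff (B := U)).mp hxy)
  exact (mem_connectedComponentIn_preimage_val_iff (B := Prod.snd ⁻¹' U)).mpr
    (torusSection_mem_connectedComponentIn x.2 y.2 fun t ht => (hU ht).2)

lemma continuous_torusToLine (ha : 0 ≤ a) (hN : a + h ≤ N) : Continuous (torusToLine ha hN) :=
  continuous_subtype_val.snd.subtype_mk _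

lemma isInterleaving_line_torus {n : ℕ} (ha : 0 ≤ a) (hN : a + h ≤ N) (h4 : h ≤ 4 * n) :
    IsInterleaving (lineMapper N) (torusMapper a h N) n := by
  have hη : ∀ t, (lineToTorus a h N t : ℝ × ℝ).2 = t := fun t => torusSection_snd t
  refine isInterleaving_of_natural n
    (inducedMap (lineToTorus a h N) hη fun _ _ _ => lineToTorus_mem_connectedComponentIn)
    (inducedMap (torusToLine ha hN) (fun _ => rfl) fun U _ _ =>
      (continuous_torusToLine ha hN).mem_connectedComponentIn_of_mapsTo
        (A := (fun p : torusSet a h N => (p : ℝ × ℝ).2) ⁻¹' U)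
        (B := (fun t : lineSpace N => (t : ℝ)) ⁻¹' U) fun _ hp => hp)
    (inducedMap_natural _ _ _) (inducedMap_natural _ _ _) ?_ ?_
  · intro S _ u
    induction u using Quot.ind with | _ x =>
    congr 1
    exact congrArg (Quot.mk _) (Subtype.ext (Subtype.ext (hη x)))
  · intro S hS u
    induction u using Quot.ind with | _ p =>
    exact ((mapperCosheafOf_mk_eq_mk_iff (g := Prod.snd)).mpr
      (torusSection_snd_mem_connectedComponentIn ha hN h4 hS p.1.2 p.2)).symm

lemma not_isInterleaving_line_torus {n : ℕ} (h4 : 4 * n < h) :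
    ¬ IsInterleaving (lineMapper N) (torusMapper a h N) n := by
  rintro ⟨φ, ψ, -, -, -, hφψ⟩
  set S : Set (CoverPoset 1) := {tauC 1 (a + 2 * n)}
  have hS : downSet S = S := downSet_singleton_tauC _
  have h4' : (4 * n + 1 : ℝ) ≤ h := by exact_mod_cast h4
  set t : ℝ := a + 2 * n + 1 / 2 with ht
  have htS : t ∈ geomRealization S :=
    ⟨_, mem_singleton _, by rw [coe_tauC]; push_cast; constructor <;> linarith [ht]⟩
  have hloop : ∀ c ∈ ({-1, 1} : Set ℝ), (c, t) ∈ torusSet a h N :=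
    fun c hc => Or.inl (Or.inr ⟨hc, by linarith [ht], by linarith [ht]⟩)
  let A : (torusMapper a h N).obj S := Quot.mk _ ⟨⟨(-1, t), hloop _ (by simp)⟩, htS⟩
  let B : (torusMapper a h N).obj S := Quot.mk _ ⟨⟨(1, t), hloop _ (by simp)⟩, htS⟩
  have hline : Subsingleton ((lineMapper N).obj (thicken S n)) := by
    refine Pi0.subsingleton_of_isPreconnected (isPreconnected_preimage_val ?_)
    rw [geomRealization_thicken_singleton_tauC]
    exact (ordConnected_Icc.inter ordConnected_Ioo).isPreconnected
  have hAB := hφψ S hS A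
  rw [Subsingleton.elim (ψ S A) (ψ S B), hφψ S hS B] at hAB
  refine notMem_connectedComponentIn_loop ?_ t
    ((mapperCosheafOf_mk_eq_mk_iff (g := Prod.snd)).mp hAB.symm)
  rw [geomRealization_thicken_singleton_tauC]
  push_cast
  exact Ioo_subset_Ioo (by linarith) (by linarith)

end Interleavings

theorem interleavingDist_line_torus_general (a N : ℤ) (h : ℕ)
    (ha : 0 < a) (hN : a + (h : ℤ) < N) :
    interleavingDist (lineMapper N) (torusMapper a h N) = (((h + 3) / 4 : ℕ) : ℕ∞) :=
  interleavingDist_eq (isInterleaving_line_torus ha.le hN.le (by omega)) fun n hn => by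
    have h4 : h ≤ 4 * n := not_lt.mp fun h4 => not_isInterleaving_line_torus h4 hn
    omega

/-- The interleaving distance between the line mapper cosheaf and the torus
mapper cosheaf with loop of height `h` is `⌈h/4⌉`. -/
theorem interleavingDist_line_torus (a N : ℤ) (h : ℕ)
    (ha : 0 < a) (hh : 0 < h) (hN : a + (h : ℤ) < N) :
    interleavingDist (lineMapper N) (torusMapper a h N) = (((h + 3) / 4 : ℕ) : ℕ∞) :=
  interleavingDist_line_torus_general a N h ha hN
end

section
/- For the basic open set $S_{\sigma_i}$ in the cover poset, the set of cells whose basic opens lie in the $n$-thickening is $\{\rho : S_\rho \in S_{\sigma_i}^n\} = \{\sigma_j : j \in [i-n, i+n]\} \cup \{\tau_j : j \in [i-n-1, i+n]\}$, and for an edge $\tau_i$: $\{\rho : S_\rho \in S_{\tau_i}^n\} = \{\sigma_j : j \in [i-n+1, i+n]\} \cup \{\tau_j : j \in [i-n, i+n]\}$. -/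
variable {α : Type*} [Preorder α]

section Aux

variable {δ : ℝ}

lemma int_mul_le (hδ : 0 < δ) {p q : ℝ} (hpq : p * δ ≤ q * δ) : p ≤ q :=
  le_of_mul_le_mul_right hpq hδ

lemma sig_le_sig (hδ : 0 < δ) {i j : ℤ} : sigC δ j ≤ sigC δ i ↔ j = i := by
  show Usig δ j ⊆ Usig δ i ↔ _
  unfold Usig
  rw [Set.Ioo_subset_Ioo_iff (by nlinarith)]
  constructor
  · rintro ⟨h1, h2⟩
    have h1' := int_mul_le hδ h1
    have h2' := int_mul_le hδ h2
    have : (i : ℝ) ≤ j := by linarith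
    have : (j : ℝ) ≤ i := by linarith
    have hij : i ≤ j := by exact_mod_cast ‹(i : ℝ) ≤ j›
    have hji : j ≤ i := by exact_mod_cast ‹(j : ℝ) ≤ i›
    omega
  · rintro rfl; exact ⟨le_rfl, le_rfl⟩

lemma tau_le_tau (hδ : 0 < δ) {i j : ℤ} : tauC δ j ≤ tauC δ i ↔ j = i := by
  show Utau δ j ⊆ Utau δ i ↔ _
  unfold Utau
  rw [Set.Ioo_subset_Ioo_iff (by nlinarith)]
  constructor
  · rintro ⟨h1, h2⟩
    have h1' := int_mul_le hδ h1
    have h2' := int_mul_le hδ h2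
    have : (i : ℝ) ≤ j := by linarith
    have : (j : ℝ) ≤ i := by linarith
    have hij : i ≤ j := by exact_mod_cast ‹(i : ℝ) ≤ j›
    have hji : j ≤ i := by exact_mod_cast ‹(j : ℝ) ≤ i›
    omega
  · rintro rfl; exact ⟨le_rfl, le_rfl⟩

lemma tau_le_sig (hδ : 0 < δ) {i j : ℤ} : tauC δ j ≤ sigC δ i ↔ i - 1 ≤ j ∧ j ≤ i := by
  show Utau δ j ⊆ Usig δ i ↔ _
  unfold Utau Usig
  rw [Set.Ioo_subset_Ioo_iff (by nlinarith)]
  constructor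
  · rintro ⟨h1, h2⟩
    have h1' := int_mul_le hδ h1
    have h2' := int_mul_le hδ h2
    have ha : (i : ℝ) - 1 ≤ j := by linarith
    have hb : (j : ℝ) ≤ i := by linarith
    have ha' : (i - 1 : ℤ) ≤ j := by exact_mod_cast (by push_cast; linarith : ((i - 1 : ℤ) : ℝ) ≤ (j : ℝ))
    have hb' : j ≤ i := by exact_mod_cast hb
    omega
  · rintro ⟨h1, h2⟩
    constructor
    · have : ((i : ℝ) - 1) ≤ j := by
        have : ((i - 1 : ℤ) : ℝ) ≤ (j : ℝ) := by exact_mod_cast h1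
        push_cast at this; linarith
      nlinarith
    · have : (j : ℝ) ≤ i := by exact_mod_cast h2
      nlinarith

lemma sig_not_le_tau (hδ : 0 < δ) {i j : ℤ} : ¬ sigC δ j ≤ tauC δ i := by
  intro h
  have h' : Usig δ j ⊆ Utau δ i := h
  unfold Usig Utau at h'
  rw [Set.Ioo_subset_Ioo_iff (by nlinarith)] at h'
  obtain ⟨h1, h2⟩ := h'
  have h1' := int_mul_le hδ h1
  have h2' := int_mul_le hδ h2
  linarith

lemma classifyC (U : CoverPoset δ) : (∃ k, U = sigC δ k) ∨ (∃ k, U = tauC δ k) := by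
  obtain ⟨u, hu | hu⟩ := U
  · obtain ⟨k, rfl⟩ := hu
    exact Or.inl ⟨k, rfl⟩
  · obtain ⟨k, rfl⟩ := hu
    exact Or.inr ⟨k, rfl⟩

/-- A "block": the σ's in `[a,b]` together with the τ's in `[a-1,b]`. -/
def block (δ : ℝ) (a b : ℤ) : Set (CoverPoset δ) :=
  {U | (∃ j, a ≤ j ∧ j ≤ b ∧ U = sigC δ j) ∨ (∃ j, a - 1 ≤ j ∧ j ≤ b ∧ U = tauC δ j)}

lemma block_step (hδ : 0 < δ) {a b : ℤ} (hab : a ≤ b + 1) :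
    downSet (upSet (block δ a b)) = block δ (a - 1) (b + 1) := by
  ext U
  constructor
  · rintro ⟨V, ⟨W, hW, hWV⟩, hUV⟩
    -- classify V
    rcases classifyC V with ⟨m, rfl⟩ | ⟨m, rfl⟩
    · -- V = sigC m; find range of m
      have hm : a - 1 ≤ m ∧ m ≤ b + 1 := by
        rcases hW with ⟨k, hk1, hk2, rfl⟩ | ⟨k, hk1, hk2, rfl⟩
        · have := (sig_le_sig hδ).1 hWV; omega
        · have := (tau_le_sig hδ).1 hWV; omega
      rcases classifyC U with ⟨p, rfl⟩ | ⟨p, rfl⟩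
      · have := (sig_le_sig hδ).1 hUV
        exact Or.inl ⟨p, by omega, by omega, rfl⟩
      · have := (tau_le_sig hδ).1 hUV
        exact Or.inr ⟨p, by omega, by omega, rfl⟩
    · -- V = tauC m
      have hm : a - 1 ≤ m ∧ m ≤ b := by
        rcases hW with ⟨k, hk1, hk2, rfl⟩ | ⟨k, hk1, hk2, rfl⟩
        · exact absurd hWV (sig_not_le_tau hδ)
        · have := (tau_le_tau hδ).1 hWV; omega
      rcases classifyC U with ⟨p, rfl⟩ | ⟨p, rfl⟩
      · exact absurd hUV (sig_not_le_tau hδ)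
      · have := (tau_le_tau hδ).1 hUV
        exact Or.inr ⟨p, by omega, by omega, rfl⟩
  · rintro (⟨p, hp1, hp2, rfl⟩ | ⟨p, hp1, hp2, rfl⟩)
    · -- U = sigC p, a - 1 ≤ p ≤ b + 1
      by_cases hcase : a ≤ p ∧ p ≤ b
      · exact subset_downUp _ (Or.inl ⟨p, hcase.1, hcase.2, rfl⟩)
      · rcases (by omega : p = a - 1 ∨ p = b + 1) with rfl | rfl
        · refine ⟨sigC δ (a - 1), ⟨tauC δ (a - 1), Or.inr ⟨a - 1, by omega, by omega, rfl⟩, ?_⟩, le_rfl⟩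
          exact (tau_le_sig hδ).2 (by omega)
        · refine ⟨sigC δ (b + 1), ⟨tauC δ b, Or.inr ⟨b, by omega, by omega, rfl⟩, ?_⟩, le_rfl⟩
          exact (tau_le_sig hδ).2 (by omega)
    · -- U = tauC p, a - 2 ≤ p ≤ b + 1
      by_cases hcase : a - 1 ≤ p ∧ p ≤ b
      · exact subset_downUp _ (Or.inr ⟨p, hcase.1, hcase.2, rfl⟩)
      · rcases (by omega : p = a - 2 ∨ p = b + 1) with rfl | rfl
        · refine ⟨sigC δ (a - 1), ⟨tauC δ (a - 1), Or.inr ⟨a - 1, by omega, by omega, rfl⟩, ?_⟩, ?_⟩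
          · exact (tau_le_sig hδ).2 (by omega)
          · exact (tau_le_sig hδ).2 (by omega)
        · refine ⟨sigC δ (b + 1), ⟨tauC δ b, Or.inr ⟨b, by omega, by omega, rfl⟩, ?_⟩, ?_⟩
          · exact (tau_le_sig hδ).2 (by omega)
          · exact (tau_le_sig hδ).2 (by omega)

lemma thicken_block (hδ : 0 < δ) {a b : ℤ} (hab : a ≤ b + 1) (n : ℕ) :
    thicken (block δ a b) n = block δ (a - n) (b + n) := by
  induction n with
  | zero => simp [thicken]
  | succ n ih =>
    show downSet (upSet (thicken (block δ a b) n)) = _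
    rw [ih, block_step hδ (by omega)]
    congr 1 <;> push_cast <;> ring

lemma downSet_sig (hδ : 0 < δ) (i : ℤ) : downSet {sigC δ i} = block δ i i := by
  ext U
  constructor
  · rintro ⟨V, hV, hUV⟩
    rw [Set.mem_singleton_iff] at hV
    subst hV
    rcases classifyC U with ⟨p, rfl⟩ | ⟨p, rfl⟩
    · have := (sig_le_sig hδ).1 hUV
      exact Or.inl ⟨p, by omega, by omega, rfl⟩
    · have := (tau_le_sig hδ).1 hUV
      exact Or.inr ⟨p, by omega, by omega, rfl⟩
  · rintro (⟨p, hp1, hp2, rfl⟩ | ⟨p, hp1, hp2, rfl⟩)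
    · exact ⟨sigC δ i, rfl, (sig_le_sig hδ).2 (by omega)⟩
    · exact ⟨sigC δ i, rfl, (tau_le_sig hδ).2 (by omega)⟩

lemma downSet_tau (hδ : 0 < δ) (i : ℤ) : downSet {tauC δ i} = block δ (i + 1) i := by
  ext U
  constructor
  · rintro ⟨V, hV, hUV⟩
    rw [Set.mem_singleton_iff] at hV
    subst hV
    rcases classifyC U with ⟨p, rfl⟩ | ⟨p, rfl⟩
    · exact absurd hUV (sig_not_le_tau hδ)
    · have := (tau_le_tau hδ).1 hUV
      exact Or.inr ⟨p, by omega, by omega, rfl⟩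
  · rintro (⟨p, hp1, hp2, rfl⟩ | ⟨p, hp1, hp2, rfl⟩)
    · omega
    · exact ⟨tauC δ i, rfl, (tau_le_tau hδ).2 (by omega)⟩

lemma sig_mem_block (hδ : 0 < δ) {a b j : ℤ} : sigC δ j ∈ block δ a b ↔ a ≤ j ∧ j ≤ b := by
  constructor
  · rintro (⟨k, hk1, hk2, hk⟩ | ⟨k, hk1, hk2, hk⟩)
    · have := (sig_le_sig hδ).1 hk.le; omega
    · exact absurd hk.le (sig_not_le_tau hδ)
  · rintro ⟨h1, h2⟩
    exact Or.inl ⟨j, h1, h2, rfl⟩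

lemma tau_mem_block (hδ : 0 < δ) {a b j : ℤ} : tauC δ j ∈ block δ a b ↔ a - 1 ≤ j ∧ j ≤ b := by
  constructor
  · rintro (⟨k, hk1, hk2, hk⟩ | ⟨k, hk1, hk2, hk⟩)
    · exact absurd hk.ge (sig_not_le_tau hδ)
    · have := (tau_le_tau hδ).1 hk.le; omega
  · rintro ⟨h1, h2⟩
    exact Or.inr ⟨j, h1, h2, rfl⟩

end Aux

/-- The cells whose basic opens lie in the `n`-thickening of a basic open:
for a vertex `σ_i`, these are `σ_j` for `j ∈ [i-n, i+n]` and `τ_j` for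
`j ∈ [i-n-1, i+n]`; for an edge `τ_i`, they are `σ_j` for `j ∈ [i-n+1, i+n]`
and `τ_j` for `j ∈ [i-n, i+n]`. -/
theorem cells_in_thickening (δ : ℝ) (hδ : 0 < δ) (i : ℤ) (n : ℕ) (j : ℤ) :
    (sigC δ j ∈ thicken (downSet {sigC δ i}) n ↔ i - n ≤ j ∧ j ≤ i + n) ∧
    (tauC δ j ∈ thicken (downSet {sigC δ i}) n ↔ i - n - 1 ≤ j ∧ j ≤ i + n) ∧
    (sigC δ j ∈ thicken (downSet {tauC δ i}) n ↔ i - n + 1 ≤ j ∧ j ≤ i + n) ∧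
    (tauC δ j ∈ thicken (downSet {tauC δ i}) n ↔ i - n ≤ j ∧ j ≤ i + n) := by
  rw [downSet_sig hδ i, downSet_tau hδ i, thicken_block hδ (by omega) n,
    thicken_block hδ (by omega) n, sig_mem_block hδ, tau_mem_block hδ,
    sig_mem_block hδ, tau_mem_block hδ]
  omega
end
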